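/- arXiv:quant-ph/0405013 — 2 statements merged into one kernel-verified Lean document; each statement's English description precedes it below -/
import Mathlib

section
/- Let n ≥ 3 be an integer such that both n and n+2 are prime. Then the polynomial ε_n + ε_{n+1} − ε_{n−1} − ε_{n+2} is nonzero and lowdeg(ε_n + ε_{n+1} − ε_{n−1} − ε_{n+2}) = n − 1. (This is the 'anomalously small' two-particle energy difference δε ∼ α^{n−1} h for twin-prime sites.) -/
open Polynomial Filter

/-- The on-site energy polynomial `ε_n(α) = (−1)^n − Σ_{k=2}^{n+1} (−1)^{⌊n/k⌋} α^{k−1}` in `ℤ[α]`. -/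
noncomputable def eps (n : ℕ) : Polynomial ℤ :=
  C ((-1 : ℤ) ^ n) - ∑ k ∈ Finset.Icc 2 (n + 1), C ((-1 : ℤ) ^ (n / k)) * X ^ (k - 1)

/-- `Q_n(m) = ∏_{s=1}^m (ε_{n+s}(α) − ε_n(α))`. -/
noncomputable def Q (n m : ℕ) : Polynomial ℤ :=
  ∏ s ∈ Finset.Icc 1 m, (eps (n + s) - eps n)

/-- `lowdeg P`: the multiplicity of the root `α = 0`, i.e. the least `i` with nonzero
coefficient of `α^i`. -/
noncomputable def lowdeg (P : Polynomial ℤ) : ℕ := P.natTrailingDegree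

lemma eps_coeff (m i : ℕ) : (eps m).coeff i =
    (if i = 0 then (-1:ℤ)^m else 0) - (if 1 ≤ i ∧ i ≤ m then (-1:ℤ)^(m/(i+1)) else 0) := by
  unfold eps
  rw [Polynomial.coeff_sub, Polynomial.finset_sum_coeff]
  have h1 : ∀ k ∈ Finset.Icc 2 (m+1), (C ((-1:ℤ)^(m/k)) * X ^ (k-1)).coeff i
      = if i + 1 = k then (-1:ℤ)^(m/(i+1)) else 0 := by
    intro k hk
    simp only [Finset.mem_Icc] at hk
    rw [Polynomial.coeff_C_mul, Polynomial.coeff_X_pow]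
    by_cases h : i + 1 = k
    · rw [if_pos h, if_pos (by omega), ← h]
      ring
    · rw [if_neg h, if_neg (by omega), mul_zero]
  rw [Finset.sum_congr rfl h1, Finset.sum_ite_eq]
  congr 1
  · rw [Polynomial.coeff_C]
  · by_cases h : 1 ≤ i ∧ i ≤ m
    · rw [if_pos (Finset.mem_Icc.mpr (by omega)), if_pos h]
    · rw [if_neg (fun hm => h (by simp [Finset.mem_Icc] at hm; omega)), if_neg h]

theorem twin_prime_pair_energy_difference (n : ℕ) (hn : 3 ≤ n)
    (hp : Nat.Prime n) (hp2 : Nat.Prime (n + 2)) :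
    eps n + eps (n + 1) - eps (n - 1) - eps (n + 2) ≠ 0 ∧
    lowdeg (eps n + eps (n + 1) - eps (n - 1) - eps (n + 2)) = n - 1 := by
  set D := eps n + eps (n + 1) - eps (n - 1) - eps (n + 2) with hD
  have hDc : ∀ i, D.coeff i =
      (eps n).coeff i + (eps (n+1)).coeff i - (eps (n-1)).coeff i - (eps (n+2)).coeff i := by
    intro i; simp [hD]
  have key : D.coeff (n - 1) = 2 := by
    rw [hDc, eps_coeff, eps_coeff, eps_coeff, eps_coeff]
    have h0 : ¬ (n - 1 = 0) := by omega
    rw [if_neg h0, if_neg h0, if_neg h0, if_neg h0]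
    rw [if_pos ⟨by omega, by omega⟩, if_pos ⟨by omega, by omega⟩,
        if_pos ⟨by omega, by omega⟩, if_pos ⟨by omega, by omega⟩]
    have hk : n - 1 + 1 = n := by omega
    rw [hk]
    have e1 : n / n = 1 := Nat.div_self (by omega)
    have e2 : (n+1) / n = 1 := Nat.div_eq_of_lt_le (by omega) (by omega)
    have e3 : (n-1) / n = 0 := Nat.div_eq_of_lt (by omega)
    have e4 : (n+2) / n = 1 := Nat.div_eq_of_lt_le (by omega) (by omega)
    rw [e1, e2, e3, e4]
    ring
  have low : ∀ i, i < n - 1 → D.coeff i = 0 := by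
    intro i hi
    rw [hDc, eps_coeff, eps_coeff, eps_coeff, eps_coeff]
    by_cases h0 : i = 0
    · subst h0
      norm_num
      obtain ⟨m, rfl⟩ : ∃ m, n = m + 3 := ⟨n - 3, by omega⟩
      show ((-1:ℤ)^(m+3)) + ((-1:ℤ)^(m+3+1)) - ((-1:ℤ)^(m+2)) - ((-1:ℤ)^(m+3+2)) = 0
      ring
    · rw [if_neg h0, if_neg h0, if_neg h0, if_neg h0]
      rw [if_pos ⟨by omega, by omega⟩, if_pos ⟨by omega, by omega⟩,
          if_pos ⟨by omega, by omega⟩, if_pos ⟨by omega, by omega⟩]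
      set k := i + 1 with hk
      have hk2 : 2 ≤ k := by omega
      have hkn : k ≤ n - 1 := by omega
      have hnd : ¬ k ∣ n := by
        intro h
        rcases (Nat.Prime.eq_one_or_self_of_dvd hp k h) with h1 | h1 <;> omega
      have hnd2 : ¬ k ∣ (n + 2) := by
        intro h
        rcases (Nat.Prime.eq_one_or_self_of_dvd hp2 k h) with h1 | h1 <;> omega
      have e1 : n / k = (n - 1) / k := by
        have := @Nat.succ_div (n - 1) k
        rw [if_neg (by rwa [show n - 1 + 1 = n by omega])] at this
        rw [show n - 1 + 1 = n by omega] at this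
        omega
      have e2 : (n + 2) / k = (n + 1) / k := by
        have := @Nat.succ_div (n + 1) k
        rw [if_neg (by rwa [show n + 1 + 1 = n + 2 by omega])] at this
        rw [show n + 1 + 1 = n + 2 by omega] at this
        omega
      rw [e1, e2]
      ring
  have hne : D ≠ 0 := by
    intro h
    rw [h] at key
    simp at key
  refine ⟨hne, ?_⟩
  unfold lowdeg
  refine le_antisymm (Polynomial.natTrailingDegree_le_of_ne_zero (by rw [key]; norm_num)) ?_
  exact Polynomial.le_natTrailingDegree hne low
end

section
/- Let n ≥ 5 be an integer with n ≡ 5 (mod 6). Then every coefficient of α^j with 0 ≤ j ≤ 3 in the polynomial ε_n + ε_{n+1} − ε_{n−1} − ε_{n+2} vanishes; i.e., if this polynomial is nonzero then lowdeg(ε_n + ε_{n+1} − ε_{n−1} − ε_{n+2}) ≥ 4. (This is the broad-band resonance: for n = 6k−1 the two-particle energy difference for the transition (n,n+1) ↔ (n−1,n+2) is of order α^ξ h with ξ ≥ 4.) -/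
open Polynomial Filter

lemma eps_coeff_zero (n : ℕ) : (eps n).coeff 0 = (-1) ^ n := by
  simp only [eps, Polynomial.coeff_sub, Polynomial.coeff_C, Polynomial.finset_sum_coeff,
    Polynomial.coeff_C_mul, Polynomial.coeff_X_pow, if_true]
  rw [Finset.sum_eq_zero, sub_zero]
  intro k hk
  simp only [Finset.mem_Icc] at hk
  rw [if_neg (by omega), mul_zero]

lemma eps_coeff_s18 (n j : ℕ) (h1 : 1 ≤ j) (h2 : j ≤ n) :
    (eps n).coeff j = -(-1) ^ (n / (j + 1)) := by
  simp only [eps, Polynomial.coeff_sub, Polynomial.coeff_C, Polynomial.finset_sum_coeff,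
    Polynomial.coeff_C_mul, Polynomial.coeff_X_pow, if_neg (by omega : ¬ j = 0)]
  rw [Finset.sum_eq_single (j + 1)]
  · rw [if_pos (by omega), mul_one, zero_sub]
  · intro k hk hne
    simp only [Finset.mem_Icc] at hk
    rw [if_neg (by omega), mul_zero]
  · intro h
    exact absurd (Finset.mem_Icc.mpr ⟨by omega, by omega⟩) h

theorem broadband_resonance_low_coeffs_vanish (n : ℕ) (hn : 5 ≤ n)
    (hmod : n % 6 = 5) :
    ∀ j : ℕ, j ≤ 3 → (eps n + eps (n + 1) - eps (n - 1) - eps (n + 2)).coeff j = 0 := by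
  obtain ⟨m, rfl⟩ : ∃ m, n = 6 * m + 5 := ⟨n / 6, by omega⟩
  have hsub : 6 * m + 5 - 1 = 6 * m + 4 := by omega
  rw [hsub]
  intro j hj
  simp only [Polynomial.coeff_sub, Polynomial.coeff_add]
  interval_cases j
  · rw [eps_coeff_zero, eps_coeff_zero, eps_coeff_zero, eps_coeff_zero,
      Odd.neg_one_pow ⟨3 * m + 2, by ring⟩, Even.neg_one_pow ⟨3 * m + 3, by ring⟩,
      Even.neg_one_pow ⟨3 * m + 2, by ring⟩, Odd.neg_one_pow ⟨3 * m + 3, by ring⟩]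
    ring
  · rw [eps_coeff_s18 _ 1 le_rfl (by omega), eps_coeff_s18 _ 1 le_rfl (by omega),
      eps_coeff_s18 _ 1 le_rfl (by omega), eps_coeff_s18 _ 1 le_rfl (by omega),
      (by omega : (6 * m + 5) / 2 = 3 * m + 2), (by omega : (6 * m + 5 + 1) / 2 = 3 * m + 3),
      (by omega : (6 * m + 4) / 2 = 3 * m + 2), (by omega : (6 * m + 5 + 2) / 2 = 3 * m + 3)]
    ring
  · rw [eps_coeff_s18 _ 2 (by omega) (by omega), eps_coeff_s18 _ 2 (by omega) (by omega),
      eps_coeff_s18 _ 2 (by omega) (by omega), eps_coeff_s18 _ 2 (by omega) (by omega),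
      (by omega : (6 * m + 5) / 3 = 2 * m + 1), (by omega : (6 * m + 5 + 1) / 3 = 2 * m + 2),
      (by omega : (6 * m + 4) / 3 = 2 * m + 1), (by omega : (6 * m + 5 + 2) / 3 = 2 * m + 2)]
    ring
  · rw [eps_coeff_s18 _ 3 (by omega) (by omega), eps_coeff_s18 _ 3 (by omega) (by omega),
      eps_coeff_s18 _ 3 (by omega) (by omega), eps_coeff_s18 _ 3 (by omega) (by omega),
      (by omega : (6 * m + 5) / 4 = (6 * m + 4) / 4),
      (by omega : (6 * m + 5 + 1) / 4 = (6 * m + 5 + 2) / 4)]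
    ring
end
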